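/- For all n ≥ 1 and k ≥ 0, the number of permutations of length n avoiding both 123 and 132 with exactly k ascents equals C(n, 2k). -/

import Mathlib

open scoped Classical

/-- The word `π₁π₂⋯π_n` of a permutation of `{1,…,n}`, with values in `{1,…,n}`. -/
def permWord {n : ℕ} (π : Equiv.Perm (Fin n)) : List ℕ :=
  List.ofFn fun i => (π i : ℕ) + 1

/-- The word `l` contains the word `ρ` as a (classical) pattern. -/
def ContainsPat (l ρ : List ℕ) : Prop :=
  ∃ f : Fin ρ.length → Fin l.length, StrictMono f ∧
    ∀ a b : Fin ρ.length, ρ.get a < ρ.get b ↔ l.get (f a) < l.get (f b)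

/-- `l` avoids every pattern in the list `B`. -/
def AvoidsAll (l : List ℕ) (B : List (List ℕ)) : Prop :=
  ∀ ρ ∈ B, ¬ ContainsPat l ρ

/-- Number of ascents of the word `l`. -/
def ascents (l : List ℕ) : ℕ :=
  ((Finset.range (l.length - 1)).filter fun i => l.getD i 0 < l.getD (i + 1) 0).card

/-- Number of descents of the word `l`. -/
def descents (l : List ℕ) : ℕ :=
  ((Finset.range (l.length - 1)).filter fun i => l.getD (i + 1) 0 < l.getD i 0).card

/-- Number of double ascents of the word `l`. -/
def dascents (l : List ℕ) : ℕ :=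
  ((Finset.range (l.length - 2)).filter fun i =>
    l.getD i 0 < l.getD (i + 1) 0 ∧ l.getD (i + 1) 0 < l.getD (i + 2) 0).card

/-- Number of double descents of the word `l`. -/
def ddescents (l : List ℕ) : ℕ :=
  ((Finset.range (l.length - 2)).filter fun i =>
    l.getD (i + 1) 0 < l.getD i 0 ∧ l.getD (i + 2) 0 < l.getD (i + 1) 0).card

/-- Number of peaks of the word `l`. -/
def peaks (l : List ℕ) : ℕ :=
  ((Finset.range (l.length - 2)).filter fun i =>
    l.getD i 0 < l.getD (i + 1) 0 ∧ l.getD (i + 2) 0 < l.getD (i + 1) 0).card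

/-- Number of valleys of the word `l`. -/
def valleys (l : List ℕ) : ℕ :=
  ((Finset.range (l.length - 2)).filter fun i =>
    l.getD (i + 1) 0 < l.getD i 0 ∧ l.getD (i + 1) 0 < l.getD (i + 2) 0).card

/-- `acount n k stat B` is the number of permutations of `{1,…,n}` avoiding all
patterns in `B` whose statistic `stat` equals `k`. -/
noncomputable def acount (n k : ℕ) (stat : List ℕ → ℕ) (B : List (List ℕ)) : ℕ :=
  (Finset.univ.filter fun π : Equiv.Perm (Fin n) =>
    AvoidsAll (permWord π) B ∧ stat (permWord π) = k).card

def asc' : List ℕ → ℕ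
  | x :: y :: t => (if x < y then 1 else 0) + asc' (y :: t)
  | _ => 0

lemma ascents_eq (l : List ℕ) : ascents l = asc' l := by
  induction l with
  | nil => simp [ascents, asc']
  | cons x t ih =>
    match t, ih with
    | [], _ => simp [ascents, asc']
    | y :: t, ih =>
      have h1 : asc' (x :: y :: t) = (if x < y then 1 else 0) + asc' (y :: t) := rfl
      rw [h1, ← ih]
      unfold ascents
      simp only [List.length_cons, Nat.add_sub_cancel]
      rw [Finset.card_filter, Finset.card_filter, Finset.sum_range_succ']
      simp only [List.getD_cons_succ, List.getD_cons_zero]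
      omega

def NoRise (l : List ℕ) : Prop :=
  ∀ i j k : ℕ, i < j → j < k → k < l.length →
    ¬ (l.getD i 0 < l.getD j 0 ∧ l.getD i 0 < l.getD k 0)

lemma getD_eq_getElem' (l : List ℕ) {i : ℕ} (h : i < l.length) : l.getD i 0 = l[i] :=
  List.getD_eq_getElem l 0 h

lemma avoids_iff (l : List ℕ) (hl : l.Nodup) :
    AvoidsAll l [[1,2,3],[1,3,2]] ↔ NoRise l := by
  constructor
  · intro hA i j k hij hjk hk ⟨h1, h2⟩
    have hj : j < l.length := lt_trans hjk hk
    have hi : i < l.length := lt_trans hij hj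
    rw [getD_eq_getElem' l hi, getD_eq_getElem' l hj] at h1
    rw [getD_eq_getElem' l hi, getD_eq_getElem' l hk] at h2
    have hne : l[j] ≠ l[k] := fun h => absurd (hl.getElem_inj_iff.mp h) (by omega)
    rcases lt_or_gt_of_ne hne with hlt | hgt
    · apply hA [1,2,3] (by simp)
      refine ⟨![⟨i, hi⟩, ⟨j, hj⟩, ⟨k, hk⟩], ?_, ?_⟩
      · intro a b hab
        fin_cases a <;> fin_cases b <;>
          simp_all [Fin.lt_def, Matrix.cons_val_zero, Matrix.cons_val_one] <;> omega
      · intro a b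
        fin_cases a <;> fin_cases b <;>
          simp_all [List.get_eq_getElem, Fin.lt_def] <;> omega
    · apply hA [1,3,2] (by simp)
      refine ⟨![⟨i, hi⟩, ⟨j, hj⟩, ⟨k, hk⟩], ?_, ?_⟩
      · intro a b hab
        fin_cases a <;> fin_cases b <;>
          simp_all [Fin.lt_def, Matrix.cons_val_zero, Matrix.cons_val_one] <;> omega
      · intro a b
        fin_cases a <;> fin_cases b <;>
          simp_all [List.get_eq_getElem, Fin.lt_def] <;> omega
  · intro hN ρ hρ ⟨f, hf, hiff⟩
    have hρ' : ρ = [1,2,3] ∨ ρ = [1,3,2] := by simpa using hρ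
    rcases hρ' with rfl | rfl <;>
    · set a0 : Fin (3:ℕ) := ⟨0, by norm_num⟩
      set a1 : Fin (3:ℕ) := ⟨1, by norm_num⟩
      set a2 : Fin (3:ℕ) := ⟨2, by norm_num⟩
      have h01 : f a0 < f a1 := hf (by simp [a0, a1, Fin.lt_def])
      have h12 : f a1 < f a2 := hf (by simp [a1, a2, Fin.lt_def])
      have e1 : l.get (f a0) < l.get (f a1) := (hiff a0 a1).mp (by decide)
      have e2 : l.get (f a0) < l.get (f a2) := (hiff a0 a2).mp (by decide)
      refine hN (f a0) (f a1) (f a2) h01 h12 (f a2).isLt ⟨?_, ?_⟩ <;>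
        rw [getD_eq_getElem' l (Fin.isLt _), getD_eq_getElem' l (Fin.isLt _)] <;>
        simpa [List.get_eq_getElem] using (by assumption : _)

noncomputable def acw (n k : ℕ) : ℕ :=
  (((List.range' 1 n).permutations.toFinset).filter (fun l => NoRise l ∧ asc' l = k)).card

lemma permWord_nodup {n : ℕ} (π : Equiv.Perm (Fin n)) : (permWord π).Nodup := by
  rw [permWord, List.nodup_ofFn]
  intro a b hab
  simp only at hab
  exact π.injective (Fin.val_injective (by omega))

lemma permWord_perm {n : ℕ} (π : Equiv.Perm (Fin n)) :
    (permWord π).Perm (List.range' 1 n) := by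
  apply List.perm_of_nodup_nodup_toFinset_eq (permWord_nodup π) (List.nodup_range' (s := 1) (n := n))
  ext x
  simp only [List.mem_toFinset, permWord, List.mem_ofFn, Set.mem_range, List.mem_range'_1]
  constructor
  · rintro ⟨i, rfl⟩
    have := (π i).isLt
    omega
  · rintro ⟨h1, h2⟩
    refine ⟨π.symm ⟨x - 1, by omega⟩, ?_⟩
    rw [Equiv.apply_symm_apply]
    simp; omega

lemma permWord_length {n : ℕ} (π : Equiv.Perm (Fin n)) : (permWord π).length = n := by
  simp [permWord]

lemma acount_eq_acw (n k : ℕ) :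
    (Finset.univ.filter fun π : Equiv.Perm (Fin n) =>
      NoRise (permWord π) ∧ asc' (permWord π) = k).card = acw n k := by
  apply Finset.card_bij (fun π _ => permWord π)
  · intro π hπ
    simp only [Finset.mem_filter, Finset.mem_univ, true_and] at hπ ⊢
    exact ⟨List.mem_toFinset.mpr (List.mem_permutations.mpr (permWord_perm π)), hπ⟩
  · intro π _ π' _ h
    ext i
    have h2 := congrArg (fun l : List ℕ => l.getD (i : ℕ) 0) h
    simp only [permWord] at h2
    rw [List.getD_eq_getElem _ _ (by simp : (i:ℕ) < (List.ofFn fun j => (π j : ℕ) + 1).length),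
        List.getD_eq_getElem _ _ (by simp : (i:ℕ) < (List.ofFn fun j => (π' j : ℕ) + 1).length)] at h2
    simp only [List.getElem_ofFn, Fin.eta] at h2
    omega
  · intro l hl
    simp only [Finset.mem_filter, List.mem_toFinset, List.mem_permutations] at hl
    obtain ⟨hperm, hprops⟩ := hl
    have hlen : l.length = n := by rw [hperm.length_eq]; simp
    have hmem : ∀ {i : ℕ} (h : i < l.length), 1 ≤ l[i] ∧ l[i] ≤ n := by
      intro i h
      have : l[i] ∈ List.range' 1 n := hperm.mem_iff.mp (l.getElem_mem h)
      rw [List.mem_range'_1] at this; omega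
    have hnd : l.Nodup := hperm.nodup_iff.mpr (List.nodup_range' (s := 1) (n := n))
    set g : Fin n → Fin n := fun i => ⟨l[(i:ℕ)]'(by omega) - 1, by
      have := hmem (show (i:ℕ) < l.length by omega); omega⟩ with hg
    have hginj : Function.Injective g := by
      intro a b hab
      simp only [hg, Fin.mk.injEq] at hab
      have h1 := hmem (show (a:ℕ) < l.length by omega)
      have h2 := hmem (show (b:ℕ) < l.length by omega)
      have : l[(a:ℕ)] = l[(b:ℕ)] := by omega
      exact Fin.val_injective (hnd.getElem_inj_iff.mp this)
    set π : Equiv.Perm (Fin n) := Equiv.ofBijective g (Finite.injective_iff_bijective.mp hginj)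
      with hπ
    have hword : permWord π = l := by
      apply List.ext_getElem (by simp [permWord_length, hlen])
      intro i h1 h2
      have h3 : (i : ℕ) < n := by simpa [permWord_length] using h1
      simp only [permWord, List.getElem_ofFn, hπ, Equiv.ofBijective_apply, hg]
      have := hmem (show i < l.length by omega)
      omega
    refine ⟨π, ?_, hword⟩
    simp only [Finset.mem_filter, Finset.mem_univ, true_and, hword]
    exact hprops

/-- The canonical avoider word with descending prefix of length `p`,
then the max `m+p+1`, then a word `l'` on `{1,…,m}`. -/
def bword (m p : ℕ) (l' : List ℕ) : List ℕ :=
  (List.range' (m+1) p).reverse ++ (m+p+1) :: l'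

lemma bword_length (m p : ℕ) (l' : List ℕ) :
    (bword m p l').length = p + 1 + l'.length := by
  simp [bword]; omega

lemma bword_getElem_lt (m p : ℕ) (l' : List ℕ) {q : ℕ} (hq : q < p)
    (h : q < (bword m p l').length) : (bword m p l')[q] = m + p - q := by
  simp only [bword]
  rw [List.getElem_append_left (by simpa using hq),
    List.getElem_reverse, List.getElem_range']
  simp; omega

lemma bword_getElem_eq (m p : ℕ) (l' : List ℕ)
    (h : p < (bword m p l').length) : (bword m p l')[p] = m + p + 1 := by
  simp only [bword]
  rw [List.getElem_append_right (by simp)]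
  simp

lemma bword_getElem_gt (m p : ℕ) (l' : List ℕ) {q : ℕ} (hq : p < q)
    (h : q < (bword m p l').length) : (bword m p l')[q] =
      l'[q - p - 1]'(by rw [bword_length] at h; omega) := by
  simp only [bword]
  rw [List.getElem_append_right (by simp; omega)]
  rw [List.getElem_cons]
  simp only [List.length_reverse, List.length_range']
  rw [dif_neg (by omega)]

lemma asc'_desc_append (D t : List ℕ) (hD : D.Chain' (· > ·)) (hne : D ≠ []) :
    asc' (D ++ t) = asc' (D.getLast hne :: t) := by
  induction D with
  | nil => exact absurd rfl hne
  | cons d D ih =>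
    match D, hD with
    | [], _ => rfl
    | d' :: D', hD =>
      have hdd : d > d' := (List.isChain_cons_cons.mp hD).1
      have h1 : (d :: d' :: D') ++ t = d :: (d' :: (D' ++ t)) := rfl
      rw [h1]
      have h2 : asc' (d :: d' :: (D' ++ t)) = (if d < d' then 1 else 0)
          + asc' (d' :: (D' ++ t)) := rfl
      rw [h2, if_neg (by omega), List.getLast_cons (by simp)]
      rw [Nat.zero_add]
      exact ih (List.isChain_cons_cons.mp hD).2 (by simp)

lemma asc'_cons_of_head_le (x : ℕ) (l' : List ℕ) (hx : ∀ y ∈ l', y < x) :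
    asc' (x :: l') = asc' l' := by
  match l' with
  | [] => rfl
  | y :: t =>
    have : asc' (x :: y :: t) = (if x < y then 1 else 0) + asc' (y :: t) := rfl
    rw [this, if_neg (by have := hx y (by simp); omega), Nat.zero_add]

/-- Ascents of the canonical word. -/
lemma asc'_bword (m p : ℕ) (l' : List ℕ) (hl' : ∀ y ∈ l', y ≤ m) :
    asc' (bword m p l') = asc' l' + (if 1 ≤ p then 1 else 0) := by
  have hhead : ∀ y ∈ l', y < m + p + 1 := fun y hy => by have := hl' y hy; omega
  rcases Nat.eq_zero_or_pos p with rfl | hp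
  · rw [if_neg (by omega), Nat.add_zero]
    simp only [bword, List.range', List.reverse_nil, List.nil_append]
    rw [asc'_cons_of_head_le _ _ hhead]
  · rw [if_pos (show 1 ≤ p by omega)]
    simp only [bword]
    rw [asc'_desc_append _ _ ?_ (by simp; omega)]
    · have hlast : (List.range' (m+1) p).reverse.getLast (by simp; omega) = m + 1 := by
        rw [List.getLast_reverse, List.head_range']
      rw [hlast]
      have : asc' ((m+1) :: (m+p+1) :: l') = (if m+1 < m+p+1 then 1 else 0)
          + asc' ((m+p+1) :: l') := rfl
      rw [this, if_pos (by omega), asc'_cons_of_head_le _ _ hhead]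
      omega
    · unfold List.Chain'
      rw [List.isChain_reverse]
      have := List.pairwise_lt_range' (s := m+1) (n := p)
      exact (List.pairwise_lt_range' (s := m+1) (n := p)).isChain.imp (fun a b h => by exact h)

lemma NoRise_drop (l : List ℕ) (m : ℕ) (h : NoRise l) : NoRise (l.drop m) := by
  intro i j k hij hjk hk ⟨h1, h2⟩
  have hlen : (l.drop m).length = l.length - m := List.length_drop
  have hj : j < (l.drop m).length := lt_trans hjk hk
  have hi : i < (l.drop m).length := lt_trans hij hj
  have gd : ∀ (q : ℕ) (hq : q < (l.drop m).length),
      (l.drop m).getD q 0 = l.getD (m + q) 0 := by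
    intro q hq
    rw [List.getD_eq_getElem _ _ hq, List.getD_eq_getElem _ _ (by omega), List.getElem_drop]
  rw [gd i hi, gd j hj] at h1
  rw [gd i hi, gd k hk] at h2
  exact h (m+i) (m+j) (m+k) (by omega) (by omega) (by omega) ⟨h1, h2⟩

lemma bword_le_of_gt (m p : ℕ) (l' : List ℕ) (hle : ∀ y ∈ l', y ≤ m) {q : ℕ}
    (hq : p < q) (h : q < (bword m p l').length) : (bword m p l')[q] ≤ m := by
  rw [bword_getElem_gt m p l' hq h]
  exact hle _ (List.getElem_mem _)

lemma NoRise_bword (m p : ℕ) (l' : List ℕ) (hl' : NoRise l') (hle : ∀ y ∈ l', y ≤ m) :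
    NoRise (bword m p l') := by
  intro i j k hij hjk hk ⟨h1, h2⟩
  have hlen := bword_length m p l'
  have hj : j < (bword m p l').length := lt_trans hjk hk
  have hi : i < (bword m p l').length := lt_trans hij hj
  rw [List.getD_eq_getElem _ _ hi, List.getD_eq_getElem _ _ hj] at h1
  rw [List.getD_eq_getElem _ _ hi, List.getD_eq_getElem _ _ hk] at h2
  -- value at any index > i, ≠ p is < value at i, when i < p
  have key : ∀ q (hq : q < (bword m p l').length), i < q → q ≠ p → i < p →
      (bword m p l')[q] < (bword m p l')[i] := by
    intro q hq hiq hqp hip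
    rw [bword_getElem_lt m p l' hip hi]
    rcases lt_or_gt_of_ne hqp with h' | h'
    · rw [bword_getElem_lt m p l' h' hq]; omega
    · have := bword_le_of_gt m p l' hle h' hq; omega
  rcases lt_trichotomy i p with hip | rfl | hip
  · rcases eq_or_ne j p with rfl | hjp
    · exact absurd h2 (by have := key k hk (by omega) (by omega) hip; omega)
    · exact absurd h1 (by have := key j hj (by omega) hjp hip; omega)
  · have hj' : (bword m i l')[j] ≤ m := bword_le_of_gt m i l' hle hij hj
    rw [bword_getElem_eq m i l' hi] at h1
    omega
  · have hjq : p < j := lt_trans hip hij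
    have hkq : p < k := lt_trans hjq hjk
    rw [bword_getElem_gt m p l' hip hi, bword_getElem_gt m p l' hjq hj] at h1
    rw [bword_getElem_gt m p l' hip hi, bword_getElem_gt m p l' hkq hk] at h2
    have hkl : k - p - 1 < l'.length := by omega
    refine hl' (i-p-1) (j-p-1) (k-p-1) (by omega) (by omega) hkl ⟨?_, ?_⟩
    · rw [List.getD_eq_getElem _ _ (by omega), List.getD_eq_getElem _ _ (by omega)]
      exact h1
    · rw [List.getD_eq_getElem _ _ (by omega), List.getD_eq_getElem _ _ hkl]
      exact h2

lemma top_values (n : ℕ) (l : List ℕ) (hperm : l.Perm (List.range' 1 n)) (hN : NoRise l)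
    (p : ℕ) (hp : p < l.length) (hpn : l[p] = n) {i : ℕ} (hip : i < p)
    (hi : i < l.length) : l[i] = n - 1 - i := by
  have hlen : l.length = n := by rw [hperm.length_eq]; simp
  have hnd : l.Nodup := hperm.nodup_iff.mpr (List.nodup_range' (s := 1) (n := n))
  have hmem : ∀ {q : ℕ} (h : q < l.length), 1 ≤ l[q] ∧ l[q] ≤ n := by
    intro q h
    have : l[q] ∈ List.range' 1 n := hperm.mem_iff.mp (l.getElem_mem h)
    rw [List.mem_range'_1] at this; omega
  -- any index a < p dominates later indices except p
  have hA : ∀ a b (ha : a < l.length) (hb : b < l.length), a < p → a < b → b ≠ p →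
      l[b] < l[a] := by
    intro a b ha hb hap hab hbp
    have hne : l[b] ≠ l[a] := fun h => by have := hnd.getElem_inj_iff.mp h; omega
    have haval : l[a] < n := by
      have h1 := (hmem ha).2
      have : l[a] ≠ n := fun h => by
        have : l[a] = l[p] := by rw [h, hpn]
        have := hnd.getElem_inj_iff.mp this; omega
      omega
    by_contra hcon
    have hab' : l[a] < l[b] := by omega
    rcases lt_or_gt_of_ne hbp with h' | h'
    · refine hN a b p hab h' hp ⟨?_, ?_⟩ <;>
        rw [List.getD_eq_getElem _ _ (by omega), List.getD_eq_getElem _ _ (by omega)] <;>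
        simp [hpn, hab', haval]
    · refine hN a p b (by omega) h' hb ⟨?_, ?_⟩ <;>
        rw [List.getD_eq_getElem _ _ (by omega), List.getD_eq_getElem _ _ (by omega)] <;>
        simp [hpn, hab', haval]
  have hival : l[i] < n := by
    have h1 := (hmem hi).2
    have : l[i] ≠ n := fun h => by
      have : l[i] = l[p] := by rw [h, hpn]
      have := hnd.getElem_inj_iff.mp this; omega
    omega
  -- the set of values above l[i]
  have hFG : (Finset.Icc 1 n).filter (fun v => l[i] < v)
      = (insert p (Finset.range i)).image (fun j => l.getD j 0) := by
    ext v
    simp only [Finset.mem_filter, Finset.mem_Icc, Finset.mem_image, Finset.mem_insert,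
      Finset.mem_range]
    constructor
    · rintro ⟨⟨hv1, hv2⟩, hv3⟩
      have : v ∈ l := hperm.mem_iff.mpr (by rw [List.mem_range'_1]; omega)
      obtain ⟨j, hjl, hjv⟩ := List.getElem_of_mem this
      refine ⟨j, ?_, by rw [List.getD_eq_getElem _ _ hjl, hjv]⟩
      rcases eq_or_ne j p with rfl | hjp
      · left; rfl
      · right
        by_contra hc
        have hij' : i ≤ j := by omega
        rcases eq_or_lt_of_le hij' with rfl | hij''
        · omega
        · have := hA i j hi hjl hip hij'' hjp; omega
    · rintro ⟨j, hj, rfl⟩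
      rcases hj with rfl | hj
      · rw [List.getD_eq_getElem _ _ hp, hpn]
        refine ⟨⟨by omega, le_refl n⟩, hival⟩
      · have hjl : j < l.length := by omega
        rw [List.getD_eq_getElem _ _ hjl]
        have h1 := hmem hjl
        have h2 := hA j i hjl hi (by omega) hj (by omega)
        exact ⟨⟨h1.1, h1.2⟩, by omega⟩
  have hcard1 : ((Finset.Icc 1 n).filter (fun v => l[i] < v)).card = n - l[i] := by
    have he : (Finset.Icc 1 n).filter (fun v => l[i] < v) = Finset.Icc (l[i]+1) n := by
      ext v
      simp only [Finset.mem_filter, Finset.mem_Icc]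
      omega
    rw [he, Nat.card_Icc]
    omega
  have hcard2 : (((insert p (Finset.range i)).image (fun j => l.getD j 0))).card = i + 1 := by
    rw [Finset.card_image_of_injOn, Finset.card_insert_of_notMem (by simp; omega),
      Finset.card_range]
    intro a ha b hb hab
    simp only [Finset.coe_insert, Set.mem_insert_iff, Finset.mem_coe, Finset.mem_range] at ha hb
    have hal : a < l.length := by rcases ha with rfl | ha <;> omega
    have hbl : b < l.length := by rcases hb with rfl | hb <;> omega
    simp only at hab
    rw [List.getD_eq_getElem _ _ hal, List.getD_eq_getElem _ _ hbl] at hab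
    exact hnd.getElem_inj_iff.mp hab
  have hfin : n - l[i] = i + 1 := by rw [← hcard1, hFG, hcard2]
  have := (hmem hi).1
  omega

lemma bword_perm' (m p : ℕ) (l' : List ℕ) :
    (bword m p l').Perm (List.range' (m+1) (p+1) ++ l') := by
  have h1 : List.range' (m+1) p ++ [m+p+1] = List.range' (m+1) (p+1) := by
    have h := List.range'_append (s := m+1) (m := p) (n := 1) (step := 1)
    rw [show (m+1)+1*p = m+p+1 by omega] at h
    simpa using h
  have h2 : bword m p l' = ((List.range' (m+1) p).reverse ++ [m+p+1]) ++ l' := by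
    simp [bword]
  rw [h2, ← h1]
  exact ((List.reverse_perm _).append_right _).append_right _

lemma range'_split (m p : ℕ) :
    List.range' 1 (m + p + 1) = List.range' 1 m ++ List.range' (m+1) (p+1) := by
  have h := List.range'_append (s := 1) (m := m) (n := p+1) (step := 1)
  rw [show 1+1*m = m+1 by omega, show m+(p+1) = m+p+1 by omega] at h
  exact h.symm

lemma bword_perm_iff (m p : ℕ) (l' : List ℕ) :
    (bword m p l').Perm (List.range' 1 (m+p+1)) ↔ l'.Perm (List.range' 1 m) := by
  rw [range'_split m p]
  constructor
  · intro h
    have h2 : (List.range' (m+1) (p+1) ++ l').Perm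
        (List.range' (m+1) (p+1) ++ List.range' 1 m) :=
      ((bword_perm' m p l').symm.trans h).trans List.perm_append_comm
    exact (List.perm_append_left_iff _).mp h2
  · intro h
    refine (bword_perm' m p l').trans ?_
    exact (h.append_left _).trans List.perm_append_comm

lemma drop_bword (m p : ℕ) (l' : List ℕ) : (bword m p l').drop (p+1) = l' := by
  have : bword m p l' = ((List.range' (m+1) p).reverse ++ [m+p+1]) ++ l' := by
    simp [bword]
  rw [this, List.drop_left' (by simp)]

lemma struct (n : ℕ) (l : List ℕ) (hperm : l.Perm (List.range' 1 n)) (hN : NoRise l)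
    (p : ℕ) (hp : p < l.length) (hpn : l[p] = n) :
    l = bword (n - p - 1) p (l.drop (p+1)) := by
  have hlen : l.length = n := by rw [hperm.length_eq]; simp
  apply List.ext_getElem (by rw [bword_length, List.length_drop]; omega)
  intro q h1 h2
  rcases lt_trichotomy q p with h | rfl | h
  · rw [bword_getElem_lt _ _ _ h h2, top_values n l hperm hN p hp hpn h h1]
    omega
  · rw [bword_getElem_eq _ _ _ h2, hpn]
    omega
  · rw [bword_getElem_gt _ _ _ h h2, List.getElem_drop]
    congr 1
    omega


lemma range'_le {n y : ℕ} {l' : List ℕ} (hperm : l'.Perm (List.range' 1 n)) (hy : y ∈ l') :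
    1 ≤ y ∧ y ≤ n := by
  have := hperm.mem_iff.mp hy
  rw [List.mem_range'_1] at this
  omega

lemma indexOf_bword (m p : ℕ) (l' : List ℕ) (hperm : (bword m p l').Perm (List.range' 1 (m+p+1))) :
    (bword m p l').idxOf (m+p+1) = p := by
  have hnd : (bword m p l').Nodup := hperm.nodup_iff.mpr (List.nodup_range')
  have hlen : p < (bword m p l').length := by rw [bword_length]; omega
  have hpn : (bword m p l')[p] = m+p+1 := bword_getElem_eq m p l' hlen
  have hmem : (m+p+1) ∈ bword m p l' := hpn ▸ List.getElem_mem hlen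
  have hq : (bword m p l').idxOf (m+p+1) < (bword m p l').length :=
    List.idxOf_lt_length_iff.mpr hmem
  have : (bword m p l')[(bword m p l').idxOf (m+p+1)] = (bword m p l')[p] := by
    rw [List.getElem_idxOf hq, hpn]
  exact hnd.getElem_inj_iff.mp this

lemma fiber_card (n k p : ℕ) (hp : p < n) :
    ((((List.range' 1 n).permutations.toFinset).filter
        (fun l => NoRise l ∧ asc' l = k)).filter (fun l => l.idxOf n = p)).card
      = if p = 0 then acw (n-1) k else if k = 0 then 0 else acw (n-p-1) (k-1) := by
  set m := n - p - 1 with hm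
  have hmn : m + p + 1 = n := by omega
  -- facts about members of the fiber
  have hfacts : ∀ l, l ∈ (((List.range' 1 n).permutations.toFinset).filter
        (fun l => NoRise l ∧ asc' l = k)).filter (fun l => l.idxOf n = p) →
      l = bword m p (l.drop (p+1)) ∧ (l.drop (p+1)).Perm (List.range' 1 m) ∧
      NoRise (l.drop (p+1)) ∧ asc' (l.drop (p+1)) + (if 1 ≤ p then 1 else 0) = k := by
    intro l hl
    simp only [Finset.mem_filter, List.mem_toFinset, List.mem_permutations] at hl
    obtain ⟨⟨hperm, hN, hasc⟩, hidx⟩ := hl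
    have hnl : n ∈ l := hperm.mem_iff.mpr (by rw [List.mem_range'_1]; omega)
    have hplen : p < l.length := hidx ▸ List.idxOf_lt_length_iff.mpr hnl
    have hpn : l[p] = n := by
      have h := List.getElem_idxOf (List.idxOf_lt_length_iff.mpr hnl :
        List.idxOf n l < l.length)
      simp only [hidx] at h
      exact h
    have hst : l = bword m p (l.drop (p+1)) := struct n l hperm hN p hplen hpn
    have hperm' : (l.drop (p+1)).Perm (List.range' 1 m) := by
      rw [← bword_perm_iff m p, ← hst, hmn]
      exact hperm
    have hbound : ∀ y ∈ l.drop (p+1), y ≤ m := fun y hy => (range'_le hperm' hy).2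
    refine ⟨hst, hperm', NoRise_drop l (p+1) hN, ?_⟩
    rw [← asc'_bword m p _ hbound, ← hst, hasc]
  by_cases hpk : 1 ≤ p ∧ k = 0
  · obtain ⟨hp1, rfl⟩ := hpk
    rw [if_neg (by omega), if_pos rfl]
    rw [Finset.card_eq_zero, Finset.eq_empty_iff_forall_notMem]
    intro l hl
    have := (hfacts l hl).2.2.2
    rw [if_pos hp1] at this
    omega
  -- bijection with avoider words of length m
  have hδk : (if 1 ≤ p then 1 else 0) ≤ k ∨ p = 0 := by
    by_cases h : 1 ≤ p
    · left; rw [if_pos h]; omega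
    · right; omega
  have key : ((((List.range' 1 n).permutations.toFinset).filter
        (fun l => NoRise l ∧ asc' l = k)).filter (fun l => l.idxOf n = p)).card
      = acw m (k - (if 1 ≤ p then 1 else 0)) := by
    rw [acw]
    apply Finset.card_bij (fun l _ => l.drop (p+1))
    · intro l hl
      obtain ⟨hst, hperm', hN', hasc'⟩ := hfacts l hl
      simp only [Finset.mem_filter, List.mem_toFinset, List.mem_permutations]
      exact ⟨hperm', hN', by omega⟩
    · intro l₁ h₁ l₂ h₂ h
      rw [(hfacts l₁ h₁).1, (hfacts l₂ h₂).1, h]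
    · intro l' hl'
      simp only [Finset.mem_filter, List.mem_toFinset, List.mem_permutations] at hl'
      obtain ⟨hperm', hN', hasc'⟩ := hl'
      have hbound : ∀ y ∈ l', y ≤ m := fun y hy => (range'_le hperm' hy).2
      have hδ : (if 1 ≤ p then 1 else 0) ≤ k := by
        rcases hδk with h | h
        · exact h
        · rw [if_neg (by omega)]; omega
      refine ⟨bword m p l', ?_, drop_bword m p l'⟩
      have hperm : (bword m p l').Perm (List.range' 1 n) := by
        rw [← hmn]
        exact (bword_perm_iff m p l').mpr hperm'
      simp only [Finset.mem_filter, List.mem_toFinset, List.mem_permutations]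
      refine ⟨⟨hperm, NoRise_bword m p l' hN' hbound, ?_⟩, ?_⟩
      · rw [asc'_bword m p l' hbound, hasc']
        omega
      · rw [← hmn]
        exact indexOf_bword m p l' (hmn ▸ hperm)
  rw [key]
  rcases Nat.eq_zero_or_pos p with rfl | hp1
  · rw [if_pos rfl, if_neg (by omega), Nat.sub_zero]
    have hmm : m = n - 1 := by omega
    rw [hmm]
  · rw [if_pos (show 1 ≤ p by omega), if_neg (by omega), if_neg (show ¬ k = 0 by omega)]

lemma acw_zero (k : ℕ) : acw 0 k = if k = 0 then 1 else 0 := by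
  have h : NoRise [] := fun i j k' h1 h2 h3 => by simp at h3
  have h0 : (List.range' 1 0) = [] := rfl
  rw [acw, h0]
  simp only [List.permutations_nil]
  rw [show ([[]] : List (List ℕ)).toFinset = {[]} from rfl, Finset.filter_singleton]
  by_cases hk : k = 0
  · subst hk
    rw [if_pos ⟨h, rfl⟩]
    simp
  · rw [if_neg (by simp [asc']; omega), if_neg hk]
    simp

lemma acw_rec (n k : ℕ) (hn : 1 ≤ n) :
    acw n k = ∑ p ∈ Finset.range n,
      (if p = 0 then acw (n-1) k else if k = 0 then 0 else acw (n-p-1) (k-1)) := by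
  rw [acw]
  rw [Finset.card_eq_sum_card_fiberwise (f := fun l => l.idxOf n) (t := Finset.range n) ?_]
  · exact Finset.sum_congr rfl (fun p hp => fiber_card n k p (Finset.mem_range.mp hp))
  · intro l hl
    simp only [Finset.mem_coe, Finset.mem_filter, List.mem_toFinset, List.mem_permutations] at hl
    have hnl : n ∈ l := hl.1.mem_iff.mpr (by rw [List.mem_range'_1]; omega)
    have h2 := List.idxOf_lt_length_iff.mpr hnl
    have hlen : l.length = n := by rw [hl.1.length_eq]; simp
    simp only [Finset.coe_range, Set.mem_Iio]
    omega

lemma sum_range_choose_eq (M j : ℕ) :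
    ∑ m ∈ Finset.range M, Nat.choose m j = Nat.choose M (j+1) := by
  rcases Nat.eq_zero_or_pos M with rfl | hM
  · simp [Nat.choose_eq_zero_of_lt (by omega : 0 < j + 1)]
  · have h1 : Finset.range M = Finset.Icc 0 (M-1) := by ext x; simp; omega
    rw [h1]
    calc ∑ m ∈ Finset.Icc 0 (M-1), Nat.choose m j
        = ∑ m ∈ Finset.Icc j (M-1), Nat.choose m j := by
          refine (Finset.sum_subset (Finset.Icc_subset_Icc_left (Nat.zero_le j)) ?_).symm
          intro x hx hx2
          simp only [Finset.mem_Icc] at hx hx2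
          exact Nat.choose_eq_zero_of_lt (by omega)
      _ = Nat.choose (M-1+1) (j+1) := Nat.sum_Icc_choose _ _
      _ = Nat.choose M (j+1) := by congr 1; omega

lemma acw_eq (n k : ℕ) : acw n k = Nat.choose n (2*k) := by
  induction n using Nat.strong_induction_on generalizing k with
  | _ n ih =>
    rcases Nat.eq_zero_or_pos n with rfl | hn
    · rw [acw_zero]
      rcases Nat.eq_zero_or_pos k with rfl | hk
      · simp
      · rw [if_neg (by omega), Nat.choose_eq_zero_of_lt (by omega)]
    · obtain ⟨n', rfl⟩ : ∃ n', n = n' + 1 := ⟨n - 1, by omega⟩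
      rw [acw_rec _ k (by omega), Finset.sum_range_succ']
      simp only [if_pos rfl, Nat.succ_ne_zero, if_neg (Nat.succ_ne_zero _),
        Nat.add_sub_cancel]
      rcases Nat.eq_zero_or_pos k with rfl | hk
      · simp only [if_pos rfl]
        rw [ih n' (by omega) 0]
        simp
      · obtain ⟨k', rfl⟩ : ∃ k', k = k' + 1 := ⟨k - 1, by omega⟩
        simp only [if_true, if_false, Nat.succ_ne_zero, Nat.add_sub_cancel]
        have hterm : ∀ p, acw (n' + 1 - (p+1) - 1) k' = Nat.choose (n' - 1 - p) (2*k') := by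
          intro p
          rw [ih (n' + 1 - (p+1) - 1) (by omega) k']
          congr 1
          omega
        have hrefl := Finset.sum_range_reflect (fun m => Nat.choose m (2*k')) n'
        rw [Finset.sum_congr rfl (fun p _ => hterm p), hrefl,
          sum_range_choose_eq, ih n' (by omega) (k'+1),
          show 2*(k'+1) = (2*k'+1)+1 by omega, Nat.choose_succ_succ]

theorem stmt12 (n k : ℕ) (hn : 1 ≤ n) :
    acount n k ascents [[1,2,3],[1,3,2]] = Nat.choose n (2 * k) := by
  have h1 : acount n k ascents [[1,2,3],[1,3,2]] = acw n k := by
    rw [acount, ← acount_eq_acw]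
    congr 1
    apply Finset.filter_congr
    intro π _
    rw [avoids_iff _ (permWord_nodup π), ascents_eq]
  rw [h1, acw_eq]
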